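/- Let χ be the tail dependence matrix of a recursive max-weighted model on DAG D. Define coefficients λ_{jk} for j ∈ V, k ∈ an(j) recursively by λ_{jk} = 1 − ∑_{ℓ ∈ de(k) ∩ an(j)} λ_{jℓ}. Then for all i ∈ V and j ∈ An(i): b̄_{ji} = χ(j,i) − ∑_{k ∈ an(j)} λ_{jk} χ(k,i). -/

import Mathlib

open Finset
open scoped Classical

/-- `anc E j i`: there is a directed path (length ≥ 1) from `j` to `i`, i.e. `j` is a
strict ancestor of `i` in the directed graph with edge relation `E`. -/
def anc {d : ℕ} (E : Fin d → Fin d → Prop) (j i : Fin d) : Prop :=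
  Relation.TransGen E j i

/-- `Anc E j i`: `j` is an ancestor of `i`, including `j = i`. -/
def Anc {d : ℕ} (E : Fin d → Fin d → Prop) (j i : Fin d) : Prop :=
  j = i ∨ Relation.TransGen E j i

/-- The tail dependence coefficient associated to a (standardized) max-linear
coefficient matrix `B`: `χ(i,j) = ∑_{k ∈ An(i) ∩ An(j)} min (B k i) (B k j)`. -/
noncomputable def tdc {d : ℕ} (E : Fin d → Fin d → Prop)
    (B : Matrix (Fin d) (Fin d) ℝ) (i j : Fin d) : ℝ :=
  ∑ k ∈ Finset.univ.filter (fun k => Anc E k i ∧ Anc E k j), min (B k i) (B k j)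


/-!
Because of the max-weighted property, `b̄_{ki} ≤ b̄_{kj}` whenever `k ∈ An(j)` and `j ∈ An(i)`, so
for `j ∈ An(i)` the minimum in `χ(j,i)` is always attained at `b̄_{ki}` and
`χ(j,i) = ∑_{k ∈ An(j)} b̄_{ki}`. Expanding every `χ(k,i)` this way and exchanging the order of
summation, `b̄_{ℓi}` for `ℓ ∈ an(j)` collects the weight `∑_{k ∈ De(ℓ) ∩ an(j)} λ_{jk}`, which is `1`
by the defining recursion of `λ`. Hence the correction term is `∑_{ℓ ∈ an(j)} b̄_{ℓi}`, and what
remains of `χ(j,i)` is the summand `ℓ = j`.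
-/

section Ancestors

variable {d : ℕ} {E : Fin d → Fin d → Prop}

theorem Anc.refl (a : Fin d) : Anc E a a := Or.inl rfl

theorem Anc.of_anc {a b : Fin d} (h : anc E a b) : Anc E a b := Or.inr h

theorem Anc.trans_anc {a b c : Fin d} (hab : Anc E a b) (hbc : anc E b c) : anc E a c := by
  rcases hab with rfl | hab
  · exact hbc
  · exact Relation.TransGen.trans hab hbc

theorem Anc.trans {a b c : Fin d} (hab : Anc E a b) (hbc : Anc E b c) : Anc E a c := by
  rcases hbc with rfl | hbc
  · exact hab
  · exact Or.inr (hab.trans_anc hbc)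

theorem sum_filter_Anc_left {ℓ : Fin d} (hℓ : ¬ anc E ℓ ℓ) {p : Fin d → Prop} (hp : p ℓ)
    (f : Fin d → ℝ) :
    ∑ k ∈ univ.filter (fun k => Anc E ℓ k ∧ p k), f k =
      f ℓ + ∑ k ∈ univ.filter (fun k => anc E ℓ k ∧ p k), f k := by
  have hfilter : univ.filter (fun k => Anc E ℓ k ∧ p k) =
      insert ℓ (univ.filter (fun k => anc E ℓ k ∧ p k)) := by
    ext k
    simp only [Finset.mem_filter, Finset.mem_univ, true_and, Finset.mem_insert]
    constructor
    · rintro ⟨rfl | h, hk⟩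
      exacts [Or.inl rfl, Or.inr ⟨h, hk⟩]
    · rintro (rfl | ⟨h, hk⟩)
      exacts [⟨Or.inl rfl, hp⟩, ⟨Or.inr h, hk⟩]
  rw [hfilter, sum_insert (by simpa using fun h _ => hℓ h)]

theorem sum_filter_Anc_right {j : Fin d} (hj : ¬ anc E j j) (f : Fin d → ℝ) :
    ∑ k ∈ univ.filter (fun k => Anc E k j), f k =
      f j + ∑ k ∈ univ.filter (fun k => anc E k j), f k := by
  have hfilter : univ.filter (fun k => Anc E k j) = insert j (univ.filter (fun k => anc E k j)) := by
    ext k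
    simp only [Finset.mem_filter, Finset.mem_univ, Finset.mem_insert, true_and]
    rfl
  rw [hfilter, sum_insert (by simpa using hj)]

end Ancestors

section Lambda

variable {d : ℕ} {E : Fin d → Fin d → Prop} {lam : Fin d → Fin d → ℝ}

theorem sum_lam_filter_Anc_anc_eq_one (hacyc : ∀ i, ¬ anc E i i)
    (hlam : ∀ j k, anc E k j → lam j k =
      1 - ∑ ℓ ∈ univ.filter (fun ℓ => anc E k ℓ ∧ anc E ℓ j), lam j ℓ)
    {j ℓ : Fin d} (hℓj : anc E ℓ j) :
    ∑ k ∈ univ.filter (fun k => Anc E ℓ k ∧ anc E k j), lam j k = 1 := by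
  rw [sum_filter_Anc_left (hacyc ℓ) hℓj, hlam j ℓ hℓj, sub_add_cancel]

theorem sum_lam_mul_sum_filter_Anc (hacyc : ∀ i, ¬ anc E i i)
    (hlam : ∀ j k, anc E k j → lam j k =
      1 - ∑ ℓ ∈ univ.filter (fun ℓ => anc E k ℓ ∧ anc E ℓ j), lam j ℓ)
    (j : Fin d) (x : Fin d → ℝ) :
    ∑ k ∈ univ.filter (fun k => anc E k j), lam j k * ∑ ℓ ∈ univ.filter (fun ℓ => Anc E ℓ k), x ℓ =
      ∑ ℓ ∈ univ.filter (fun ℓ => anc E ℓ j), x ℓ := by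
  simp_rw [mul_sum]
  rw [sum_comm' (t' := univ.filter (fun ℓ => anc E ℓ j))
    (s' := fun ℓ => univ.filter (fun k => Anc E ℓ k ∧ anc E k j))]
  · refine sum_congr rfl fun ℓ hℓ => ?_
    rw [← sum_mul, sum_lam_filter_Anc_anc_eq_one hacyc hlam (mem_filter.1 hℓ).2, one_mul]
  · intro k ℓ
    simp only [mem_filter, mem_univ, true_and]
    exact ⟨fun ⟨hkj, hℓk⟩ => ⟨⟨hℓk, hkj⟩, hℓk.trans_anc hkj⟩, fun ⟨⟨hℓk, hkj⟩, _⟩ => ⟨hkj, hℓk⟩⟩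

end Lambda

/-- Standardized coefficient matrix of a recursive max-weighted model on the DAG `E`. -/
structure IsStdMaxWeighted {d : ℕ} (E : Fin d → Fin d → Prop) (B : Matrix (Fin d) (Fin d) ℝ) :
    Prop where
  nonneg : ∀ j i, 0 ≤ B j i
  pos_iff : ∀ j i, 0 < B j i ↔ Anc E j i
  sum_col : ∀ i, ∑ k ∈ univ.filter (fun k => Anc E k i), B k i = 1
  maxWeighted : ∀ i k j, anc E k i → anc E j k → B j i = B j k * B k i / B k k

namespace IsStdMaxWeighted

variable {d : ℕ} {E : Fin d → Fin d → Prop} {B : Matrix (Fin d) (Fin d) ℝ} {i j k : Fin d}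

theorem diag_pos (hB : IsStdMaxWeighted E B) (k : Fin d) : 0 < B k k :=
  (hB.pos_iff k k).2 (Anc.refl k)

theorem eq_mul_div_diag (hB : IsStdMaxWeighted E B) (hji : Anc E j i) (hkj : Anc E k j) :
    B k i = B k j * (B j i / B j j) := by
  rcases hkj with rfl | hkj
  · rw [mul_div_cancel₀ _ (hB.diag_pos k).ne']
  rcases hji with rfl | hji
  · rw [div_self (hB.diag_pos j).ne', mul_one]
  · rw [hB.maxWeighted i j k hji hkj, mul_div_assoc]

theorem sum_filter_Anc_eq_div_diag (hB : IsStdMaxWeighted E B) (hji : Anc E j i) :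
    ∑ k ∈ univ.filter (fun k => Anc E k j), B k i = B j i / B j j := by
  calc ∑ k ∈ univ.filter (fun k => Anc E k j), B k i
      = ∑ k ∈ univ.filter (fun k => Anc E k j), B k j * (B j i / B j j) :=
        sum_congr rfl fun k hk => hB.eq_mul_div_diag hji (mem_filter.1 hk).2
    _ = B j i / B j j := by rw [← sum_mul, hB.sum_col j, one_mul]

theorem div_diag_le_one (hB : IsStdMaxWeighted E B) (hji : Anc E j i) : B j i / B j j ≤ 1 := by
  rw [← hB.sum_filter_Anc_eq_div_diag hji, ← hB.sum_col i]
  refine sum_le_sum_of_subset_of_nonneg ?_ fun k _ _ => hB.nonneg k i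
  intro k hk
  simp only [mem_filter, mem_univ, true_and] at hk ⊢
  exact hk.trans hji

theorem le_of_Anc (hB : IsStdMaxWeighted E B) (hji : Anc E j i) (hkj : Anc E k j) :
    B k i ≤ B k j := by
  rw [hB.eq_mul_div_diag hji hkj]
  exact mul_le_of_le_one_right (hB.nonneg k j) (hB.div_diag_le_one hji)

theorem tdc_eq_sum_filter_Anc (hB : IsStdMaxWeighted E B) (hji : Anc E j i) :
    tdc E B j i = ∑ k ∈ univ.filter (fun k => Anc E k j), B k i := by
  have hfilter : univ.filter (fun k => Anc E k j ∧ Anc E k i) = univ.filter (fun k => Anc E k j) :=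
    filter_congr fun k _ => ⟨And.left, fun hkj => ⟨hkj, hkj.trans hji⟩⟩
  rw [tdc, hfilter]
  exact sum_congr rfl fun k hk => min_eq_right (hB.le_of_Anc hji (mem_filter.1 hk).2)

end IsStdMaxWeighted

theorem stmt11 {d : ℕ} (E : Fin d → Fin d → Prop)
    (hacyc : ∀ i, ¬ anc E i i)
    (B : Matrix (Fin d) (Fin d) ℝ)
    (hnn : ∀ j i, 0 ≤ B j i)
    (hsgn : ∀ j i, 0 < B j i ↔ Anc E j i)
    (hcol : ∀ i, ∑ k ∈ Finset.univ.filter (fun k => Anc E k i), B k i = 1)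
    (hmw : ∀ i k j, anc E k i → anc E j k → B j i = B j k * B k i / B k k)
    (lam : Fin d → Fin d → ℝ)
    (hlam : ∀ j k, anc E k j → lam j k =
      1 - ∑ ℓ ∈ Finset.univ.filter (fun ℓ => anc E k ℓ ∧ anc E ℓ j), lam j ℓ) :
    ∀ i j, Anc E j i →
      B j i = tdc E B j i -
        ∑ k ∈ Finset.univ.filter (fun k => anc E k j), lam j k * tdc E B k i := by
  have hB : IsStdMaxWeighted E B := ⟨hnn, hsgn, hcol, hmw⟩
  intro i j hji
  have hexpand : ∀ k ∈ univ.filter (fun k => anc E k j),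
      lam j k * tdc E B k i = lam j k * ∑ ℓ ∈ univ.filter (fun ℓ => Anc E ℓ k), B ℓ i :=
    fun k hk => by rw [hB.tdc_eq_sum_filter_Anc ((Anc.of_anc (mem_filter.1 hk).2).trans hji)]
  rw [sum_congr rfl hexpand, sum_lam_mul_sum_filter_Anc hacyc hlam j (B · i),
    hB.tdc_eq_sum_filter_Anc hji, sum_filter_Anc_right (hacyc j)]
  ring
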